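/- With notation as above, if F arises from H via F(w_1,w_2,w_3) = H((w_1−w_2)/(1−w_2), w_3(1−w_2)/(1−w_3))/((1−w_2)(1−w_3)), then for each S ≥ 0 the matrix R_S = (R_S(a,b))_{0≤a,b≤S} with R_S(a,b) = [w_1^a w_2^{S−a} w_3^b]F has eigenvalues exactly e_0, e_1, …, e_S (with multiplicity), where e_n = [x^n y^n]H; in particular R_S is conjugate to the triangular matrix with (a,b)-entry C(a,b)·h_{ab}. -/

import Mathlib

open MvPowerSeries

/-- Formal partial derivative of a power series in three variables. -/
noncomputable def pderiv3 (i : Fin 3) (F : MvPowerSeries (Fin 3) ℂ) :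
    MvPowerSeries (Fin 3) ℂ :=
  fun m => ((m i : ℂ) + 1) * coeff (R := ℂ) (m + Finsupp.single i 1) F

/-- Composition `H(f,g)` of a two-variable power series `H` with two three-variable power
series `f`, `g` (intended for `f`, `g` with zero constant term, in which case the coefficient
of a monomial `m` only receives contributions from `f^i g^j` with `i + j ≤ deg m`). -/
noncomputable def comp2 (H : MvPowerSeries (Fin 2) ℂ) (f g : MvPowerSeries (Fin 3) ℂ) :
    MvPowerSeries (Fin 3) ℂ :=
  fun m =>
    ∑ p ∈ Finset.range (m.sum (fun _ e => e) + 1) ×ˢ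
        Finset.range (m.sum (fun _ e => e) + 1),
      coeff (R := ℂ) (Finsupp.single 0 p.1 + Finsupp.single 1 p.2) H *
        coeff (R := ℂ) m (f ^ p.1 * g ^ p.2)

/-- The power series `(w₁ - w₂)/(1 - w₂)`. -/
noncomputable def subx : MvPowerSeries (Fin 3) ℂ := (X 0 - X 1) * (1 - X 1)⁻¹

/-- The power series `w₃(1 - w₂)/(1 - w₃)`. -/
noncomputable def suby : MvPowerSeries (Fin 3) ℂ := X 2 * (1 - X 1) * (1 - X 2)⁻¹

/-- `F(w₁,w₂,w₃) = H((w₁-w₂)/(1-w₂), w₃(1-w₂)/(1-w₃)) / ((1-w₂)(1-w₃))`. -/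
noncomputable def FofH (H : MvPowerSeries (Fin 2) ℂ) : MvPowerSeries (Fin 3) ℂ :=
  ((1 - X 1) * (1 - X 2))⁻¹ * comp2 H subx suby

/-- The coefficient `h_{ij}` of `H`. -/
noncomputable def hcoeff (H : MvPowerSeries (Fin 2) ℂ) (i j : ℕ) : ℂ :=
  coeff (R := ℂ) (Finsupp.single 0 i + Finsupp.single 1 j) H

/-- The `(S+1)×(S+1)` matrix `R_S` with entries `R_S(a,b) = [w₁^a w₂^{S-a} w₃^b] F`. -/
noncomputable def RSmat (H : MvPowerSeries (Fin 2) ℂ) (S : ℕ) :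
    Matrix (Fin (S + 1)) (Fin (S + 1)) ℂ :=
  fun a b =>
    coeff (R := ℂ) (Finsupp.single 0 (a : ℕ) + Finsupp.single 1 (S - (a : ℕ)) +
      Finsupp.single 2 (b : ℕ)) (FofH H)

/-!
Substituting `x = (w₁ - w₂)/(1 - w₂)`, `y = w₃(1 - w₂)/(1 - w₃)`, the monomial `x^i y^j`
contributes to `F` the product `(w₁ - w₂)^i (1 - w₂)^(j-i-1) · w₃^j (1 - w₃)^(-j-1)` of a series
in `w₁, w₂` and a series in `w₃`. Reading off coefficients gives `R_S = P M Y` with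
`P(a,i) = (-1)^(i-a) C(i,a)` (from `(w₁ - w₂)^i`), `Y(j,b) = C(b,j)` (from `w₃^j/(1 - w₃)^(j+1)`)
and `M(i,j) = h_{ij} [w₂^(S-i)] (1 - w₂)^(j-i-1) = h_{ij} C(S-j, i-j)`. The matrices `P` and `Y`
are inverse Pascal matrices, and `C(S-j, i-j) C(S,j) = C(S,i) C(i,j)` says that `M = D T D⁻¹` with
`D = diag(C(S,i))` and `T(i,j) = C(i,j) h_{ij}`, which is lower triangular with diagonal `h_{ii}`.
-/

namespace PowerSeries

section toMvPowerSeries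

variable {σ R : Type*} [CommSemiring R]

@[simp]
theorem coeff_single_toMvPowerSeries (k : σ) (p : R⟦X⟧) (n : ℕ) :
    MvPowerSeries.coeff (Finsupp.single k n) (p.toMvPowerSeries k) = coeff n p := by
  have := MvPowerSeries.coeff_embDomain_rename (Function.Embedding.punit k) p (Finsupp.single () n)
  rwa [Finsupp.embDomain_single] at this

theorem eq_single_of_coeff_toMvPowerSeries_ne_zero {k : σ} {p : R⟦X⟧} {m : σ →₀ ℕ}
    (h : MvPowerSeries.coeff m (p.toMvPowerSeries k) ≠ 0) : m = Finsupp.single k (m k) := by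
  by_contra hm
  refine h (MvPowerSeries.coeff_rename_eq_zero _ _ fun ⟨x, hx⟩ => hm ?_)
  rw [← hx, ← Finsupp.univ_sum_single x]
  simp

theorem coeff_prod_toMvPowerSeries [Fintype σ] [DecidableEq σ] (p : σ → R⟦X⟧) (m : σ →₀ ℕ) :
    MvPowerSeries.coeff m (∏ k, (p k).toMvPowerSeries k) = ∏ k, coeff (m k) (p k) := by
  rw [MvPowerSeries.coeff_prod]
  set l₀ : σ →₀ σ →₀ ℕ := Finsupp.equivFunOnFinite.symm fun k => Finsupp.single k (m k)
  rw [Finset.sum_eq_single_of_mem l₀]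
  · simp [l₀]
  · simp [l₀, Finset.mem_finsuppAntidiag, Finsupp.univ_sum_single]
  · intro l hl hne
    obtain ⟨k, hk⟩ : ∃ k, MvPowerSeries.coeff (l k) ((p k).toMvPowerSeries k) = 0 := by
      by_contra! hl'
      replace hl' (k : σ) := eq_single_of_coeff_toMvPowerSeries_ne_zero (hl' k)
      have hsum : ∑ k, l k = m := (Finset.mem_finsuppAntidiag.mp hl).1
      refine hne (Finsupp.ext fun k => ?_)
      rw [hl' k]
      show _ = Finsupp.single k (m k)
      rw [← hsum, Finsupp.finsetSum_apply, Finset.sum_eq_single_of_mem k (Finset.mem_univ k)]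
      intro j _ hj
      rw [hl' j, Finsupp.single_eq_of_ne hj.symm]
    exact Finset.prod_eq_zero (Finset.mem_univ k) hk

end toMvPowerSeries

variable {R : Type*} [CommRing R]

theorem coeff_neg_X_pow_mul (e n : ℕ) (f : R⟦X⟧) :
    PowerSeries.coeff n ((-PowerSeries.X) ^ e * f) =
      if e ≤ n then (-1) ^ e * PowerSeries.coeff (n - e) f else 0 := by
  rw [neg_pow, mul_assoc, ← map_one C, ← map_neg, ← map_pow, coeff_C_mul, coeff_X_pow_mul']
  split_ifs <;> simp

open Polynomial in
theorem coeff_one_sub_X_pow_eq_zero {e n : ℕ} (h : e < n) :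
    PowerSeries.coeff n ((1 - PowerSeries.X : R⟦X⟧) ^ e) = 0 := by
  have : (1 - PowerSeries.X : R⟦X⟧) ^ e = ((1 - Polynomial.X : R[X]) ^ e : R[X]) := by simp
  rw [this, Polynomial.coeff_coe]
  refine Polynomial.coeff_eq_zero_of_natDegree_lt (lt_of_le_of_lt ?_ h)
  compute_degree!

theorem coeff_X_pow_mul_invOneSubPow (j n : ℕ) :
    PowerSeries.coeff n ((PowerSeries.X : R⟦X⟧) ^ j * (invOneSubPow R (j + 1)).val) =
      n.choose j := by
  rw [coeff_X_pow_mul', invOneSubPow_val_succ_eq_mk_add_choose]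
  split_ifs with h
  · rw [coeff_mk, Nat.add_sub_cancel' h]
  · rw [Nat.choose_eq_zero_of_lt (not_le.mp h), Nat.cast_zero]

theorem coeff_one_sub_pow_mul_invOneSubPow_of_le {i j : ℕ} (h : j ≤ i) (n : ℕ) :
    PowerSeries.coeff n ((1 - PowerSeries.X : R⟦X⟧) ^ j * (invOneSubPow R (i + 1)).val) =
      (i - j + n).choose (i - j) := by
  rw [show i + 1 = i - j + 1 + j by omega,
    one_sub_pow_mul_invOneSubPow_val_add_eq_invOneSubPow_val,
    invOneSubPow_val_succ_eq_mk_add_choose, coeff_mk]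

theorem coeff_one_sub_pow_mul_invOneSubPow_of_lt {i j n : ℕ} (h : i < j) (hn : j - i ≤ n) :
    PowerSeries.coeff n ((1 - PowerSeries.X : R⟦X⟧) ^ j * (invOneSubPow R (i + 1)).val) = 0 := by
  rw [show j = j - i - 1 + (i + 1) by omega, one_sub_pow_add_mul_invOneSubPow_val_eq_one_sub_pow]
  exact coeff_one_sub_X_pow_eq_zero (by omega)

end PowerSeries

namespace MvPowerSeries

theorem coeff_pow_mul_pow_eq_zero {σ R : Type*} [CommSemiring R] {f g : MvPowerSeries σ R}
    (hf : constantCoeff f = 0) (hg : constantCoeff g = 0) {m : σ →₀ ℕ} {i j : ℕ}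
    (h : m.degree < i + j) : coeff m (f ^ i * g ^ j) = 0 := by
  apply coeff_of_lt_order
  calc (m.degree : ℕ∞) < i + j := by exact_mod_cast h
    _ ≤ (f ^ i).order + (g ^ j).order := add_le_add
        (le_order_pow_of_constantCoeff_eq_zero i hf) (le_order_pow_of_constantCoeff_eq_zero j hg)
    _ ≤ (f ^ i * g ^ j).order := le_order_mul

theorem inv_one_sub_X {σ 𝕜 : Type*} [Field 𝕜] (k : σ) :
    (1 - X k : MvPowerSeries σ 𝕜)⁻¹ = (PowerSeries.invOneSubPow 𝕜 1).val.toMvPowerSeries k := by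
  rw [MvPowerSeries.inv_eq_iff_mul_eq_one (by simp), ← PowerSeries.toMvPowerSeries_X,
    ← map_one (PowerSeries.toMvPowerSeries k), ← map_sub, ← map_mul, ← pow_one (1 - PowerSeries.X),
    ← PowerSeries.invOneSubPow_inv_eq_one_sub_pow, Units.inv_eq_val_inv, Units.mul_inv, map_one]

theorem coeff_toMvPowerSeries_mul_mul {R : Type*} [CommSemiring R] (p₀ p₁ p₂ : PowerSeries R)
    (a c b : ℕ) :
    coeff (Finsupp.single 0 a + Finsupp.single 1 c + Finsupp.single 2 b)
        (p₀.toMvPowerSeries 0 * p₁.toMvPowerSeries 1 * p₂.toMvPowerSeries (2 : Fin 3)) =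
      PowerSeries.coeff a p₀ * PowerSeries.coeff c p₁ * PowerSeries.coeff b p₂ := by
  have h := PowerSeries.coeff_prod_toMvPowerSeries ![p₀, p₁, p₂]
    (Finsupp.single 0 a + Finsupp.single 1 c + Finsupp.single 2 b)
  rw [Fin.prod_univ_three, Fin.prod_univ_three] at h
  convert h using 2 <;> simp

end MvPowerSeries

theorem sum_neg_one_pow_mul_choose_mul_choose {R : Type*} [CommRing R] (a b : ℕ) :
    ∑ i ∈ Finset.range (b + 1), (-1 : R) ^ (i - a) * i.choose a * b.choose i =
      if a = b then 1 else 0 := by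
  -- compare the coefficients of `x ^ a` in `x ^ b = ((x - 1) + 1) ^ b`
  have h := add_pow (Polynomial.X + Polynomial.C (-1 : R)) 1 b
  rw [show Polynomial.X + Polynomial.C (-1 : R) + 1 = Polynomial.X by simp] at h
  simpa only [one_pow, mul_one, Polynomial.coeff_X_pow, Polynomial.finsetSum_coeff,
    Polynomial.coeff_mul_natCast, Polynomial.coeff_X_add_C_pow, eq_comm]
    using congrArg (Polynomial.coeff · a) h

section Pascal

variable (R : Type*) [CommRing R] (n : ℕ)

noncomputable def pascalMatrix : Matrix (Fin n) (Fin n) R :=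
  Matrix.of fun i j => ((j : ℕ).choose i : R)

noncomputable def signedPascalMatrix : Matrix (Fin n) (Fin n) R :=
  Matrix.of fun i j => (-1) ^ ((j : ℕ) - i) * ((j : ℕ).choose i : R)

theorem signedPascalMatrix_mul_pascalMatrix :
    signedPascalMatrix R n * pascalMatrix R n = 1 := by
  ext a b
  calc (signedPascalMatrix R n * pascalMatrix R n) a b
      = ∑ i ∈ Finset.range n, (-1 : R) ^ (i - a) * i.choose a * (b : ℕ).choose i := by
        rw [Matrix.mul_apply, ← Fin.sum_univ_eq_sum_range]
        rfl
    _ = ∑ i ∈ Finset.range (b + 1), (-1 : R) ^ (i - a) * i.choose a * (b : ℕ).choose i := by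
        refine (Finset.sum_subset (Finset.range_subset_range.mpr b.isLt) fun i _ hi => ?_).symm
        rw [(b : ℕ).choose_eq_zero_of_lt (by simpa using hi), Nat.cast_zero, mul_zero]
    _ = (1 : Matrix (Fin n) (Fin n) R) a b := by
        simp [sum_neg_one_pow_mul_choose_mul_choose, Matrix.one_apply, Fin.ext_iff]

end Pascal

namespace Matrix

variable {n R : Type*} [Fintype n] [DecidableEq n] [CommRing R]

theorem charpoly_of_isLowerTriangular [LinearOrder n] (M : Matrix n n R)
    (h : M.IsLowerTriangular) : M.charpoly = ∏ i, (Polynomial.X - Polynomial.C (M i i)) := by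
  simp [charpoly, det_of_isLowerTriangular _ h.charmatrix]

theorem charpoly_conj_of_isUnit_det {P : Matrix n n R} (hP : IsUnit P.det) (A : Matrix n n R) :
    (P * A * P⁻¹).charpoly = A.charpoly := by
  simpa using charpoly_units_conj ((isUnit_iff_isUnit_det P).mpr hP).unit A

end Matrix

section Composition

open Finset

variable (H : MvPowerSeries (Fin 2) ℂ) {f g : MvPowerSeries (Fin 3) ℂ}

theorem coeff_comp2 (hf : constantCoeff f = 0) (hg : constantCoeff g = 0) {m : Fin 3 →₀ ℕ}
    {N : ℕ} (hN : m.degree ≤ N) :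
    coeff m (comp2 H f g) =
      ∑ p ∈ range (N + 1) ×ˢ range (N + 1), hcoeff H p.1 p.2 * coeff m (f ^ p.1 * g ^ p.2) := by
  change ∑ p ∈ range (m.degree + 1) ×ˢ range (m.degree + 1),
    hcoeff H p.1 p.2 * coeff m (f ^ p.1 * g ^ p.2) = _
  refine sum_subset (by gcongr) fun p _ hp => ?_
  simp only [mem_product, mem_range, not_and_or, not_lt] at hp
  rw [coeff_pow_mul_pow_eq_zero hf hg (by omega), mul_zero]

theorem coeff_mul_comp2 (hf : constantCoeff f = 0) (hg : constantCoeff g = 0)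
    (A : MvPowerSeries (Fin 3) ℂ) {m : Fin 3 →₀ ℕ} {N : ℕ} (hN : m.degree ≤ N) :
    coeff m (A * comp2 H f g) =
      ∑ p ∈ range (N + 1) ×ˢ range (N + 1),
        hcoeff H p.1 p.2 * coeff m (A * (f ^ p.1 * g ^ p.2)) := by
  rw [coeff_mul]
  conv_rhs => enter [2, p]; rw [coeff_mul, mul_sum]
  rw [sum_comm]
  refine sum_congr rfl fun q hq => ?_
  have hq : q.2.degree ≤ N := by
    have := congrArg Finsupp.degree (HasAntidiagonal.mem_antidiagonal.mp hq)
    rw [map_add] at this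
    omega
  rw [coeff_comp2 H hf hg hq, mul_sum]
  exact sum_congr rfl fun p _ => by ring

end Composition

theorem constantCoeff_subx : constantCoeff subx = 0 := by simp [subx]

theorem constantCoeff_suby : constantCoeff suby = 0 := by simp [suby]

theorem inv_mul_subx_pow_mul_suby_pow (i j : ℕ) :
    ((1 - X 1) * (1 - X 2))⁻¹ * (subx ^ i * suby ^ j) =
      ∑ u ∈ Finset.range (i + 1), i.choose u •
        ((PowerSeries.X ^ u : PowerSeries ℂ).toMvPowerSeries 0 *
          ((-PowerSeries.X) ^ (i - u) * ((1 - PowerSeries.X) ^ j *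
            (PowerSeries.invOneSubPow ℂ (i + 1)).val)).toMvPowerSeries 1 *
          (PowerSeries.X ^ j *
            (PowerSeries.invOneSubPow ℂ (j + 1)).val).toMvPowerSeries (2 : Fin 3)) := by
  have hpow (n : ℕ) :
      (PowerSeries.invOneSubPow ℂ n).val = (PowerSeries.invOneSubPow ℂ 1).val ^ n := by
    rw [← Units.val_pow_eq_pow_val, PowerSeries.invOneSubPow_eq_inv_one_sub_pow,
      PowerSeries.invOneSubPow_eq_inv_one_sub_pow, pow_one]
  rw [hpow (i + 1), hpow (j + 1), subx, suby, MvPowerSeries.mul_inv_rev,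
    MvPowerSeries.inv_one_sub_X, MvPowerSeries.inv_one_sub_X]
  simp only [map_mul, map_pow, map_sub, map_one, map_neg, PowerSeries.toMvPowerSeries_X, mul_pow]
  set w₁ := (PowerSeries.invOneSubPow ℂ 1).val.toMvPowerSeries (1 : Fin 3)
  set w₂ := (PowerSeries.invOneSubPow ℂ 1).val.toMvPowerSeries (2 : Fin 3)
  trans (X 0 + -X 1) ^ i * ((1 - X 1) ^ j * w₁ ^ (i + 1) * (X 2 ^ j * w₂ ^ (j + 1)))
  · ring
  rw [add_pow, Finset.sum_mul]
  refine Finset.sum_congr rfl fun u _ => ?_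
  rw [nsmul_eq_mul]
  ring

theorem coeff_inv_mul_subx_pow_mul_suby_pow (i j a c b : ℕ) :
    coeff (Finsupp.single 0 a + Finsupp.single 1 c + Finsupp.single 2 b)
        (((1 - X 1) * (1 - X 2) : MvPowerSeries (Fin 3) ℂ)⁻¹ * (subx ^ i * suby ^ j)) =
      i.choose a * PowerSeries.coeff c ((-PowerSeries.X : PowerSeries ℂ) ^ (i - a) *
        ((1 - PowerSeries.X) ^ j * (PowerSeries.invOneSubPow ℂ (i + 1)).val)) * b.choose j := by
  rw [inv_mul_subx_pow_mul_suby_pow, map_sum]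
  simp only [map_nsmul, coeff_toMvPowerSeries_mul_mul, PowerSeries.coeff_X_pow,
    PowerSeries.coeff_X_pow_mul_invOneSubPow, ite_mul, one_mul, zero_mul, smul_ite, smul_zero,
    Finset.sum_ite_eq, Finset.mem_range]
  split_ifs with h
  · rw [nsmul_eq_mul]
    ring
  · rw [Nat.choose_eq_zero_of_lt (by omega), Nat.cast_zero, zero_mul, zero_mul]

/-- `[w^(S-i)] (1 - w)^(j-i-1)`; the exponent may be negative. -/
noncomputable def entryWeight (S i j : ℕ) : ℂ :=
  PowerSeries.coeff (S - i)
    ((1 - PowerSeries.X) ^ j * (PowerSeries.invOneSubPow ℂ (i + 1)).val)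

theorem entryWeight_mul_choose {S i j : ℕ} (hi : i ≤ S) (hj : j ≤ S) :
    entryWeight S i j * S.choose j = S.choose i * i.choose j := by
  rcases le_or_gt j i with hji | hij
  · rw [entryWeight, PowerSeries.coeff_one_sub_pow_mul_invOneSubPow_of_le hji,
      show i - j + (S - i) = S - j by omega]
    exact_mod_cast ((Nat.choose_mul (n := S) hji).trans (mul_comm _ _)).symm
  · rw [entryWeight, PowerSeries.coeff_one_sub_pow_mul_invOneSubPow_of_lt hij (by omega),
      Nat.choose_eq_zero_of_lt hij]
    simp

theorem coeff_inv_mul_subx_pow_mul_suby_pow_of_le {S a : ℕ} (ha : a ≤ S) (i j b : ℕ) :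
    coeff (Finsupp.single 0 a + Finsupp.single 1 (S - a) + Finsupp.single 2 b)
        (((1 - X 1) * (1 - X 2) : MvPowerSeries (Fin 3) ℂ)⁻¹ * (subx ^ i * suby ^ j)) =
      if i ≤ S then (-1) ^ (i - a) * i.choose a * entryWeight S i j * b.choose j else 0 := by
  rw [coeff_inv_mul_subx_pow_mul_suby_pow, PowerSeries.coeff_neg_X_pow_mul]
  rcases le_or_gt a i with hai | hia
  · simp only [show i - a ≤ S - a ↔ i ≤ S by omega, show S - a - (i - a) = S - i by omega]
    split_ifs
    · rw [entryWeight]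
      ring
    · simp
  · simp [Nat.choose_eq_zero_of_lt hia]

noncomputable def weightedCoeffMatrix (H : MvPowerSeries (Fin 2) ℂ) (S : ℕ) :
    Matrix (Fin (S + 1)) (Fin (S + 1)) ℂ :=
  Matrix.of fun i j => hcoeff H i j * entryWeight S i j

theorem RSmat_eq_signedPascal_mul_mul_pascal (H : MvPowerSeries (Fin 2) ℂ) (S : ℕ) :
    RSmat H S =
      signedPascalMatrix ℂ (S + 1) * weightedCoeffMatrix H S * pascalMatrix ℂ (S + 1) := by
  ext a b
  have ha : (a : ℕ) ≤ S := Nat.lt_succ_iff.mp a.isLt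
  have hdeg : (Finsupp.single 0 (a : ℕ) + Finsupp.single 1 (S - a) +
      Finsupp.single (2 : Fin 3) (b : ℕ)).degree ≤ S + b := by
    simp only [map_add, Finsupp.degree_single]
    omega
  simp only [RSmat, FofH, coeff_mul_comp2 H constantCoeff_subx constantCoeff_suby _ hdeg,
    coeff_inv_mul_subx_pow_mul_suby_pow_of_le ha]
  -- only `i ≤ S` contributes, and `j ≤ b ≤ S` because of the factor `C(b,j)`
  rw [← Finset.sum_subset (s₁ := Finset.range (S + 1) ×ˢ Finset.range (S + 1))
    (by gcongr <;> omega)]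
  · simp only [Finset.sum_product, Finset.sum_range, Matrix.mul_apply, Finset.sum_mul]
    rw [Finset.sum_comm]
    refine Finset.sum_congr rfl fun j _ => Finset.sum_congr rfl fun i _ => ?_
    rw [if_pos (Nat.lt_succ_iff.mp i.isLt)]
    simp only [signedPascalMatrix, pascalMatrix, weightedCoeffMatrix, Matrix.of_apply]
    ring
  · intro p _ hp
    simp only [Finset.mem_product, Finset.mem_range, not_and_or, not_lt] at hp
    rcases hp with hp | hp
    · rw [if_neg (by omega), mul_zero]
    · rw [Nat.choose_eq_zero_of_lt (by omega : (b : ℕ) < p.2)]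
      simp

theorem weightedCoeffMatrix_eq_conj (H : MvPowerSeries (Fin 2) ℂ) (S : ℕ) :
    weightedCoeffMatrix H S =
      Matrix.diagonal (fun i : Fin (S + 1) => (S.choose i : ℂ)) *
        Matrix.of (fun a b : Fin (S + 1) => ((a : ℕ).choose (b : ℕ) : ℂ) * hcoeff H a b) *
          Matrix.diagonal (fun i : Fin (S + 1) => (S.choose i : ℂ)⁻¹) := by
  ext i j
  have hi : (i : ℕ) ≤ S := Nat.lt_succ_iff.mp i.isLt
  have hj : (j : ℕ) ≤ S := Nat.lt_succ_iff.mp j.isLt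
  have hSj : (S.choose j : ℂ) ≠ 0 := Nat.cast_ne_zero.mpr (Nat.choose_pos hj).ne'
  rw [Matrix.mul_diagonal, Matrix.diagonal_mul, weightedCoeffMatrix, Matrix.of_apply,
    Matrix.of_apply, eq_mul_inv_iff_mul_eq₀ hSj, mul_assoc, entryWeight_mul_choose hi hj]
  ring

theorem exists_RSmat_eq_conj (H : MvPowerSeries (Fin 2) ℂ) (S : ℕ) :
    ∃ P : Matrix (Fin (S + 1)) (Fin (S + 1)) ℂ, IsUnit P.det ∧
      RSmat H S = P * Matrix.of (fun a b : Fin (S + 1) =>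
        ((a : ℕ).choose (b : ℕ) : ℂ) * hcoeff H (a : ℕ) (b : ℕ)) * P⁻¹ := by
  set d : Fin (S + 1) → ℂ := fun i => (S.choose i : ℂ)
  have hd : Matrix.diagonal d * Matrix.diagonal d⁻¹ = 1 := by
    rw [Matrix.diagonal_mul_diagonal, ← Matrix.diagonal_one]
    exact congrArg _ (funext fun i => mul_inv_cancel₀
      (Nat.cast_ne_zero.mpr (Nat.choose_pos (Nat.lt_succ_iff.mp i.isLt)).ne'))
  set P := signedPascalMatrix ℂ (S + 1) * Matrix.diagonal d
  have hP : P * (Matrix.diagonal d⁻¹ * pascalMatrix ℂ (S + 1)) = 1 := by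
    rw [Matrix.mul_assoc, ← Matrix.mul_assoc (Matrix.diagonal d), hd, Matrix.one_mul,
      signedPascalMatrix_mul_pascalMatrix]
  refine ⟨P, Matrix.isUnit_det_of_right_inverse hP, ?_⟩
  rw [Matrix.inv_eq_right_inv hP, RSmat_eq_signedPascal_mul_mul_pascal, weightedCoeffMatrix_eq_conj]
  simp only [P, Matrix.mul_assoc]
  rfl

/-- If `F` arises from `H`, then `R_S` is conjugate to the triangular matrix with entries
`C(a,b) h_{ab}` and its eigenvalues (with multiplicity) are exactly `e_n = [xⁿ yⁿ] H` for
`0 ≤ n ≤ S`, i.e. its characteristic polynomial is `∏_{n=0}^S (λ - e_n)`. -/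
theorem RS_eigenvalues (H : MvPowerSeries (Fin 2) ℂ) (S : ℕ) :
    (∃ P : Matrix (Fin (S + 1)) (Fin (S + 1)) ℂ, IsUnit P.det ∧
        RSmat H S = P * Matrix.of (fun a b : Fin (S + 1) =>
          ((a : ℕ).choose (b : ℕ) : ℂ) * hcoeff H (a : ℕ) (b : ℕ)) * P⁻¹) ∧
      (RSmat H S).charpoly =
        ∏ n : Fin (S + 1), (Polynomial.X - Polynomial.C (hcoeff H (n : ℕ) (n : ℕ))) := by
  obtain ⟨P, hP, hconj⟩ := exists_RSmat_eq_conj H S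
  refine ⟨⟨P, hP, hconj⟩, ?_⟩
  rw [hconj, Matrix.charpoly_conj_of_isUnit_det hP, Matrix.charpoly_of_isLowerTriangular]
  · simp
  · intro a b hab
    simp [Nat.choose_eq_zero_of_lt (show (a : ℕ) < b from hab)]
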